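/- Let A be an n×n complex matrix, let U be a unitary n×n complex matrix and R an upper triangular n×n complex matrix such that A·U = U·R (a Schur factorization of A), with diagonal entries λᵢ = Rᵢᵢ. Fix j with 1 ≤ j ≤ n, let Q_j be the n×j matrix consisting of the first j columns of U, and let Σ_j = diag(σ₁, …, σ_j) be any j×j diagonal matrix. Then the characteristic polynomial of A_j := A − Q_j·Σ_j·Q_j* equals ∏_{i=1}^{j} (X − (λᵢ − σᵢ)) · ∏_{i=j+1}^{n} (X − λᵢ); in particular the eigenvalues of A_j are λᵢ − σᵢ for i ≤ j and λᵢ for i > j. -/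

import Mathlib

/-!
With `D = diag(σ₁, …, σⱼ, 0, …, 0)` we have `Qⱼ Σⱼ Qⱼ* = U D U*` and `A = U R U*`, so
`Aⱼ = U (R - D) U*`. Conjugation by the unitary `U` preserves the characteristic polynomial,
and `R - D` is upper triangular with diagonal entries `λᵢ - σᵢ` (`i ≤ j`) and `λᵢ` (`i > j`).
-/

open Polynomial Function

namespace Matrix

variable {m n α : Type*} [Fintype m] [Fintype n]

theorem charpoly_mul_mul_of_mul_eq_one [DecidableEq n] [CommRing α]
    {U V : Matrix n n α} (hVU : V * U = 1) (M : Matrix n n α) :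
    (U * M * V).charpoly = M.charpoly := by
  rw [charpoly_mul_comm, ← mul_assoc, hVU, one_mul]

theorem submatrix_mul_diagonal_mul_submatrix [DecidableEq m] [DecidableEq n] [Semiring α]
    (U V : Matrix n n α) {e : m → n} (he : Injective e) (s : m → α) :
    U.submatrix id e * diagonal s * V.submatrix e id = U * diagonal (extend e s 0) * V := by
  ext i k
  simp only [mul_apply (M := _ * _), mul_diagonal, submatrix_apply, id]
  refine Fintype.sum_of_injective e he _ _ (fun x hx => ?_) (fun x => ?_)
  · rw [extend_apply' _ _ _ (by simpa using hx), Pi.zero_apply, mul_zero, zero_mul]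
  · rw [he.extend_apply]

end Matrix

theorem Fin.extend_castLE_apply {j n : ℕ} {α : Type*} [Zero α] (hj : j ≤ n) (s : Fin j → α)
    (i : Fin n) : extend (Fin.castLE hj) s 0 i = if h : (i : ℕ) < j then s ⟨i, h⟩ else 0 := by
  split_ifs with h
  · exact (Fin.castLE_injective hj).extend_apply s 0 ⟨i, h⟩
  · exact extend_apply' _ _ _ fun ⟨k, hk⟩ => h (hk ▸ k.isLt)

open Matrix in
theorem stmt_3_general {n j : ℕ} (hj : j ≤ n)
    (A U R : Matrix (Fin n) (Fin n) ℂ)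
    (hU₁ : U.conjTranspose * U = 1) (hU₂ : U * U.conjTranspose = 1)
    (hR : ∀ i k : Fin n, k < i → R i k = 0)
    (hAUR : A * U = U * R) (s : Fin j → ℂ)
    (Q : Matrix (Fin n) (Fin j) ℂ) (hQ : Q = Matrix.of fun i k => U i (Fin.castLE hj k)) :
    (A - Q * Matrix.diagonal s * Q.conjTranspose).charpoly =
      ∏ i : Fin n,
        (X - C (if h : (i : ℕ) < j then R i i - s ⟨(i : ℕ), h⟩ else R i i)) := by
  have hA : A = U * R * Uᴴ := by rw [← hAUR, Matrix.mul_assoc, hU₂, Matrix.mul_one]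
  have hQU : Q = U.submatrix id (Fin.castLE hj) := hQ
  have hRD : (R - diagonal (extend (Fin.castLE hj) s 0)).IsUpperTriangular :=
    BlockTriangular.sub (fun i k hki => hR i k hki) (blockTriangular_diagonal _)
  rw [hA, hQU, conjTranspose_submatrix,
    submatrix_mul_diagonal_mul_submatrix _ _ (Fin.castLE_injective hj), ← Matrix.sub_mul,
    ← Matrix.mul_sub, charpoly_mul_mul_of_mul_eq_one hU₁, charpoly_of_isUpperTriangular _ hRD]
  refine Finset.prod_congr rfl fun i _ => ?_
  rw [Matrix.sub_apply, diagonal_apply_eq, Fin.extend_castLE_apply]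
  split_ifs <;> simp

/-- **Deflation with several Schur vectors (spectral statement).**
Let `A * U = U * R` be a Schur factorization of the `n × n` complex matrix `A`
(`U` unitary, `R` upper triangular, diagonal entries `λᵢ = Rᵢᵢ`), let `Q`
consist of the first `j` columns of `U` (with `1 ≤ j ≤ n`) and let
`Σⱼ = diagonal s` be any `j × j` diagonal matrix. Then the characteristic
polynomial of `Aⱼ = A - Q Σⱼ Q*` is
`∏_{i < j} (X - (λᵢ - σᵢ)) * ∏_{i ≥ j} (X - λᵢ)`; i.e. the eigenvalues of `Aⱼ`
are `λᵢ - σᵢ` for `i < j` and `λᵢ` for `i ≥ j`. -/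
theorem stmt_3 {n j : ℕ} (hj1 : 1 ≤ j) (hj : j ≤ n)
    (A U R : Matrix (Fin n) (Fin n) ℂ)
    (hU₁ : U.conjTranspose * U = 1) (hU₂ : U * U.conjTranspose = 1)
    (hR : ∀ i k : Fin n, k < i → R i k = 0)
    (hAUR : A * U = U * R) (s : Fin j → ℂ)
    (Q : Matrix (Fin n) (Fin j) ℂ) (hQ : Q = Matrix.of fun i k => U i (Fin.castLE hj k)) :
    (A - Q * Matrix.diagonal s * Q.conjTranspose).charpoly =
      ∏ i : Fin n,
        (X - C (if h : (i : ℕ) < j then R i i - s ⟨(i : ℕ), h⟩ else R i i)) :=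
  stmt_3_general hj A U R hU₁ hU₂ hR hAUR s Q hQ
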